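/- arXiv:1807.01240 — 4 statements merged into one kernel-verified Lean document; each statement's English description precedes it below -/
import Mathlib

section
/- Let P and Q be cache algorithms over a block set B with |B| > n_P + n_Q, and let t, t' ∈ B^l be Q-equivalent traces (i.e., Q(t) = Q(t')) with P(t) ≤ P(t'). Then for every k with P(t) ≤ k ≤ P(t') there exists a trace t* ∈ B^l that is Q-equivalent to t and t' and satisfies P(t*) = k. -/
structure CacheAlg (B : Type) where
  S : Type
  init : S
  n : ℕ
  tr : S → Fin n → S
  evict : S → B → S × Fin n

variable {B : Type} [DecidableEq B]

abbrev CacheAlg.Config (P : CacheAlg B) := P.S × (Fin P.n → Option B)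

noncomputable def CacheAlg.upd (P : CacheAlg B) (g : P.Config) (b : B) : P.Config :=
  if h : ∃ j, g.2 j = some b then (P.tr g.1 h.choose, g.2)
  else ((P.evict g.1 b).1, Function.update g.2 (P.evict g.1 b).2 (some b))

noncomputable def CacheAlg.updTrace (P : CacheAlg B) (g : P.Config) : List B → P.Config
  | [] => g
  | b :: t => P.updTrace (P.upd g b) t

noncomputable def CacheAlg.missesFrom (P : CacheAlg B) (g : P.Config) : List B → ℕ
  | [] => 0
  | b :: t => (if ∃ j, g.2 j = some b then 0 else 1) + P.missesFrom (P.upd g b) t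

def CacheAlg.initConfig (P : CacheAlg B) : P.Config := (P.init, fun _ => none)

/-- Number of misses of `P` on trace `t` from the empty initial configuration. -/
noncomputable def CacheAlg.misses (P : CacheAlg B) (t : List B) : ℕ := P.missesFrom P.initConfig t

/-- The leak ratio `r_{P,Q}(l)`: supremum over sets `T` of traces of length `l`
of `|P(T)| / |Q(T)|`. -/
noncomputable def leakRatio (P Q : CacheAlg B) (l : ℕ) : ℝ :=
  sSup {r : ℝ | ∃ T : Finset (List B), T.Nonempty ∧ (∀ t ∈ T, t.length = l) ∧
    r = ((T.image P.misses).card : ℝ) / ((T.image Q.misses).card : ℝ)}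

/-- Lifting of a bijection on blocks to cache contents, mapping `⊥` to `⊥`. -/
def renameContent (π : B ≃ B) {n : ℕ} (c : Fin n → Option B) : Fin n → Option B :=
  fun j => (c j).map π

/-- Lifting of a bijection on blocks to cache configurations. -/
def CacheAlg.renameConfig (P : CacheAlg B) (π : B ≃ B) (g : P.Config) : P.Config :=
  (g.1, renameContent π g.2)

/-- The eviction function is independent of the accessed block. -/
def CacheAlg.EvictBlockIndep (P : CacheAlg B) : Prop :=
  ∀ (s : P.S) (b b' : B), P.evict s b = P.evict s b'

/-- Congruence of pairs of cache configurations via a simultaneous renaming. -/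
def CacheCongruent (P Q : CacheAlg B) (x y : P.Config × Q.Config) : Prop :=
  ∃ π : B ≃ B, P.renameConfig π x.1 = y.1 ∧ Q.renameConfig π x.2 = y.2


/-!
For a trace `w` and a cut point `i`, run `w[..i]`, then `m = Q(w) - Q(w[..i])` blocks cached in
neither cache (they exist because `|B| > n_P + n_Q`), then repeat the last block up to length
`|w|`. Each fresh block misses in both caches and each repetition hits in both, so this trace has
`Q(w)` misses under `Q` and `P(w[..i]) + m` under `P`. The latter changes by at most one when `i`
grows by one and runs from `Q(w)` at `i = 0` to `P(w)` at `i = |w|`, so it takes every value in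
between. Apply this to `t` when `k ≤ Q(t)` and to `t'` otherwise.
-/

theorem Int.exists_eq_of_forall_le_add_one {f : ℕ → ℤ} (hf : ∀ i, f (i + 1) ≤ f i + 1)
    {n : ℕ} {k : ℤ} (h₀ : f 0 ≤ k) (hn : k ≤ f n) : ∃ i, f i = k := by
  induction n with
  | zero => exact ⟨0, le_antisymm h₀ hn⟩
  | succ n ih =>
    by_cases hk : k ≤ f n
    · exact ih hk
    · exact ⟨n + 1, by linarith [hf n]⟩

theorem Int.exists_eq_of_forall_abs_sub_le_one {f : ℕ → ℤ} (hf : ∀ i, |f (i + 1) - f i| ≤ 1)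
    {n : ℕ} {k : ℤ} (hk : k ∈ Set.uIcc (f 0) (f n)) : ∃ i, f i = k := by
  rcases Set.mem_uIcc.1 hk with ⟨h₀, hn⟩ | ⟨hn, h₀⟩
  · exact exists_eq_of_forall_le_add_one (fun i => by linarith [(abs_le.1 (hf i)).2]) h₀ hn
  · obtain ⟨i, hfi⟩ := exists_eq_of_forall_le_add_one (f := fun i => -f i) (k := -k)
      (fun i => by linarith [(abs_le.1 (hf i)).1]) (neg_le_neg h₀) (neg_le_neg hn)
    exact ⟨i, neg_injective hfi⟩

section

open Cardinal

theorem Cardinal.mk_preimage_some_range_le {α : Type*} {n : ℕ} (c : Fin n → Option α) :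
    #(some ⁻¹' Set.range c : Set α) ≤ n :=
  (mk_preimage_of_injective _ _ (Option.some_injective α)).trans
    (by simpa using mk_range_le_lift (f := c))

theorem exists_some_notMem_range_of_add_lt_mk {α : Type*} {m n : ℕ} (c : Fin m → Option α)
    (d : Fin n → Option α) (h : (m + n : Cardinal) < #α) :
    ∃ a, some a ∉ Set.range c ∧ some a ∉ Set.range d := by
  by_contra! hcover
  have hsub : (Set.univ : Set α) ⊆ some ⁻¹' Set.range c ∪ some ⁻¹' Set.range d :=
    fun a _ => or_iff_not_imp_left.2 (hcover a)
  refine h.not_ge ?_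
  calc #α = #(Set.univ : Set α) := mk_univ.symm
    _ ≤ #(some ⁻¹' Set.range c ∪ some ⁻¹' Set.range d : Set α) := mk_le_mk_of_subset hsub
    _ ≤ #(some ⁻¹' Set.range c : Set α) + #(some ⁻¹' Set.range d : Set α) := mk_union_le _ _
    _ ≤ m + n := add_le_add (mk_preimage_some_range_le c) (mk_preimage_some_range_le d)

end

namespace CacheAlg

variable (P : CacheAlg B)

theorem updTrace_append (g : P.Config) (u v : List B) :
    P.updTrace g (u ++ v) = P.updTrace (P.updTrace g u) v := by
  induction u generalizing g with
  | nil => rfl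
  | cons b u ih => exact ih _

theorem missesFrom_append (g : P.Config) (u v : List B) :
    P.missesFrom g (u ++ v) = P.missesFrom g u + P.missesFrom (P.updTrace g u) v := by
  induction u generalizing g with
  | nil => simp [missesFrom, updTrace]
  | cons b u ih => simp only [List.cons_append, missesFrom, updTrace, ih, add_assoc]

theorem missesFrom_le_length (g : P.Config) (t : List B) : P.missesFrom g t ≤ t.length := by
  induction t generalizing g with
  | nil => simp [missesFrom]
  | cons b t ih =>
    simp only [missesFrom, List.length_cons]
    have := ih (P.upd g b)
    split <;> omega

theorem missesFrom_le_of_prefix {u v : List B} (h : u <+: v) (g : P.Config) :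
    P.missesFrom g u ≤ P.missesFrom g v := by
  obtain ⟨s, rfl⟩ := h
  exact (P.missesFrom_append g u s).symm ▸ Nat.le_add_right _ _

theorem missesFrom_take_succ_mem_Icc (g : P.Config) (w : List B) (i : ℕ) :
    P.missesFrom g (w.take (i + 1)) ∈
      Set.Icc (P.missesFrom g (w.take i)) (P.missesFrom g (w.take i) + 1) := by
  rw [List.take_add_one, missesFrom_append]
  have h₁ := P.missesFrom_le_length (P.updTrace g (w.take i)) w[i]?.toList
  have h₂ : w[i]?.toList.length ≤ 1 := by cases w[i]? <;> simp
  exact ⟨Nat.le_add_right _ _, by omega⟩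

theorem missesFrom_cons_of_cached {g : P.Config} {b : B} (h : ∃ j, g.2 j = some b)
    (t : List B) : P.missesFrom g (b :: t) = P.missesFrom (P.upd g b) t := by
  rw [missesFrom, if_pos h, zero_add]

theorem missesFrom_cons_of_not_cached {g : P.Config} {b : B} (h : ¬∃ j, g.2 j = some b)
    (t : List B) : P.missesFrom g (b :: t) = P.missesFrom (P.upd g b) t + 1 := by
  rw [missesFrom, if_neg h, add_comm]

theorem upd_snd_of_cached {g : P.Config} {b : B} (h : ∃ j, g.2 j = some b) :
    (P.upd g b).2 = g.2 := by
  rw [upd, dif_pos h]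

theorem cached_upd_self (g : P.Config) (b : B) : ∃ j, (P.upd g b).2 j = some b := by
  unfold upd
  split
  · assumption
  · exact ⟨(P.evict g.1 b).2, Function.update_self ..⟩

theorem missesFrom_replicate_of_cached {g : P.Config} {b : B} (h : ∃ j, g.2 j = some b)
    (r : ℕ) : P.missesFrom g (List.replicate r b) = 0 := by
  induction r generalizing g with
  | zero => rfl
  | succ r ih =>
    rw [List.replicate_succ, P.missesFrom_cons_of_cached h, ih]
    rwa [P.upd_snd_of_cached h]

theorem missesFrom_rightpad_of_getLast? {u : List B} {b : B} (hb : u.getLast? = some b)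
    (g : P.Config) (l : ℕ) : P.missesFrom g (u.rightpad l b) = P.missesFrom g u := by
  obtain ⟨u, rfl⟩ := List.getLast?_eq_some_iff.1 hb
  rw [List.rightpad, P.missesFrom_append (u := u ++ [b]), P.missesFrom_replicate_of_cached,
    add_zero]
  rw [updTrace_append]
  exact P.cached_upd_self _ b

theorem misses_pos {t : List B} (ht : t ≠ []) : 0 < P.misses t := by
  obtain ⟨b, t, rfl⟩ := List.exists_cons_of_ne_nil ht
  rw [misses, missesFrom_cons_of_not_cached]
  · omega
  · rintro ⟨j, hj⟩
    cases hj

end CacheAlg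

section Hybrid

variable (P Q : CacheAlg B) (hB : (P.n + Q.n : Cardinal) < Cardinal.mk B)

noncomputable def freshBlocks : ℕ → P.Config → Q.Config → List B
  | 0, _, _ => []
  | m + 1, gP, gQ =>
    let b := (exists_some_notMem_range_of_add_lt_mk gP.2 gQ.2 hB).choose
    b :: freshBlocks m (P.upd gP b) (Q.upd gQ b)

theorem length_freshBlocks (m : ℕ) (gP : P.Config) (gQ : Q.Config) :
    (freshBlocks P Q hB m gP gQ).length = m := by
  induction m generalizing gP gQ with
  | zero => rfl
  | succ m ih => simp [freshBlocks, ih]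

theorem missesFrom_freshBlocks (m : ℕ) (gP : P.Config) (gQ : Q.Config) :
    P.missesFrom gP (freshBlocks P Q hB m gP gQ) = m ∧
      Q.missesFrom gQ (freshBlocks P Q hB m gP gQ) = m := by
  induction m generalizing gP gQ with
  | zero => exact ⟨rfl, rfl⟩
  | succ m ih =>
    obtain ⟨hbP, hbQ⟩ := (exists_some_notMem_range_of_add_lt_mk gP.2 gQ.2 hB).choose_spec
    rw [freshBlocks, P.missesFrom_cons_of_not_cached hbP, Q.missesFrom_cons_of_not_cached hbQ,
      (ih _ _).1, (ih _ _).2]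
    exact ⟨rfl, rfl⟩

noncomputable def hybridCore (w : List B) (i : ℕ) : List B :=
  w.take i ++ freshBlocks P Q hB (Q.misses w - Q.misses (w.take i))
    (P.updTrace P.initConfig (w.take i)) (Q.updTrace Q.initConfig (w.take i))

theorem length_hybridCore_le (w : List B) (i : ℕ) :
    (hybridCore P Q hB w i).length ≤ w.length := by
  have hrest := Q.missesFrom_le_length (Q.updTrace Q.initConfig (w.take i)) (w.drop i)
  have hsplit := Q.missesFrom_append Q.initConfig (w.take i) (w.drop i)
  rw [List.take_append_drop] at hsplit
  rw [hybridCore, List.length_append, length_freshBlocks, List.length_take]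
  rw [List.length_drop] at hrest
  change Q.misses w = Q.misses (w.take i) + _ at hsplit
  omega

theorem misses_hybridCore (w : List B) (i : ℕ) :
    P.misses (hybridCore P Q hB w i) =
        P.misses (w.take i) + (Q.misses w - Q.misses (w.take i)) ∧
      Q.misses (hybridCore P Q hB w i) = Q.misses w := by
  obtain ⟨hP, hQ⟩ := missesFrom_freshBlocks P Q hB (Q.misses w - Q.misses (w.take i))
    (P.updTrace P.initConfig (w.take i)) (Q.updTrace Q.initConfig (w.take i))
  have hle : Q.misses (w.take i) ≤ Q.misses w :=
    Q.missesFrom_le_of_prefix (w.take_prefix i) _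
  refine ⟨?_, ?_⟩
  · rw [hybridCore, CacheAlg.misses, CacheAlg.missesFrom_append, hP]
    rfl
  · rw [hybridCore, CacheAlg.misses, CacheAlg.missesFrom_append, hQ]
    change Q.misses _ + _ = _
    omega

theorem hybridCore_ne_nil {w : List B} (hw : w ≠ []) (i : ℕ) : hybridCore P Q hB w i ≠ [] := by
  intro h
  have := (misses_hybridCore P Q hB w i).2
  rw [h] at this
  exact (Q.misses_pos hw).ne this

noncomputable def hybrid (b₀ : B) (w : List B) (i : ℕ) : List B :=
  (hybridCore P Q hB w i).rightpad w.length ((hybridCore P Q hB w i).getLastD b₀)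

theorem length_hybrid (b₀ : B) (w : List B) (i : ℕ) :
    (hybrid P Q hB b₀ w i).length = w.length := by
  rw [hybrid, List.length_rightpad, max_eq_left (length_hybridCore_le P Q hB w i)]

theorem misses_hybrid (R : CacheAlg B) (b₀ : B) (w : List B) (i : ℕ) :
    R.misses (hybrid P Q hB b₀ w i) = R.misses (hybridCore P Q hB w i) := by
  by_cases hw : w = []
  · subst hw
    simp [hybrid, List.rightpad]
  · apply R.missesFrom_rightpad_of_getLast?
    rw [List.getLastD_eq_getLast?, List.getLast?_eq_some_getLast (hybridCore_ne_nil P Q hB hw i)]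
    rfl

end Hybrid

theorem exists_length_eq_misses_eq_of_mem_uIcc (P Q : CacheAlg B)
    (hB : (P.n + Q.n : Cardinal) < Cardinal.mk B) (w : List B) {k : ℕ}
    (hk : k ∈ Set.uIcc (Q.misses w) (P.misses w)) :
    ∃ t : List B, t.length = w.length ∧ Q.misses t = Q.misses w ∧ P.misses t = k := by
  obtain ⟨b₀⟩ : Nonempty B := Cardinal.mk_ne_zero_iff.1 (pos_of_gt hB).ne'
  set f : ℕ → ℤ := fun i => P.misses (w.take i) + Q.misses w - Q.misses (w.take i) with hf
  have hstep : ∀ i, |f (i + 1) - f i| ≤ 1 := by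
    intro i
    obtain ⟨hP, hP'⟩ := P.missesFrom_take_succ_mem_Icc P.initConfig w i
    obtain ⟨hQ, hQ'⟩ := Q.missesFrom_take_succ_mem_Icc Q.initConfig w i
    simp only [hf, CacheAlg.misses] at hP hQ hP' hQ' ⊢
    rw [abs_le]
    omega
  have hf₀ : f 0 = Q.misses w := by simp [hf, CacheAlg.misses, CacheAlg.missesFrom]
  have hfw : f w.length = P.misses w := by simp [hf]
  obtain ⟨i, hi⟩ := Int.exists_eq_of_forall_abs_sub_le_one hstep (n := w.length) (k := k) (by
    have := Set.mem_uIcc.1 hk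
    rw [hf₀, hfw, Set.mem_uIcc]
    omega)
  obtain ⟨hP, hQ⟩ := misses_hybridCore P Q hB w i
  have hle : Q.misses (w.take i) ≤ Q.misses w := Q.missesFrom_le_of_prefix (w.take_prefix i) _
  refine ⟨hybrid P Q hB b₀ w i, length_hybrid P Q hB b₀ w i, by rw [misses_hybrid, hQ], ?_⟩
  rw [misses_hybrid, hP]
  simp only [hf] at hi
  omega

theorem exists_intermediate_trace_general (P Q : CacheAlg B)
    (hB : (P.n + Q.n : Cardinal) < Cardinal.mk B)
    (l : ℕ) (t t' : List B) (ht : t.length = l) (ht' : t'.length = l)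
    (hQeq : Q.misses t = Q.misses t')
    (k : ℕ) (hk1 : P.misses t ≤ k) (hk2 : k ≤ P.misses t') :
    ∃ tstar : List B, tstar.length = l ∧
      Q.misses tstar = Q.misses t ∧ P.misses tstar = k := by
  rcases le_or_gt k (Q.misses t) with hkQ | hkQ
  · obtain ⟨s, hs, hsQ, hsP⟩ :=
      exists_length_eq_misses_eq_of_mem_uIcc P Q hB t (Set.mem_uIcc.2 (Or.inr ⟨hk1, hkQ⟩))
    exact ⟨s, hs.trans ht, hsQ, hsP⟩
  · obtain ⟨s, hs, hsQ, hsP⟩ := exists_length_eq_misses_eq_of_mem_uIcc P Q hB t'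
      (Set.mem_uIcc.2 (Or.inl ⟨hQeq ▸ hkQ.le, hk2⟩))
    exact ⟨s, hs.trans ht', hsQ.trans hQeq.symm, hsP⟩

theorem exists_intermediate_trace (P Q : CacheAlg B)
    (hB : (P.n + Q.n : Cardinal) < Cardinal.mk B)
    (l : ℕ) (t t' : List B) (ht : t.length = l) (ht' : t'.length = l)
    (hQeq : Q.misses t = Q.misses t') (hle : P.misses t ≤ P.misses t')
    (k : ℕ) (hk1 : P.misses t ≤ k) (hk2 : k ≤ P.misses t') :
    ∃ tstar : List B, tstar.length = l ∧
      Q.misses tstar = Q.misses t ∧ P.misses tstar = k :=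
  exists_intermediate_trace_general P Q hB l t t' ht ht' hQeq k hk1 hk2
end

section
/- Every finite set T of traces of equal length that maximizes the ratio |P(T)|/|Q(T)| (i.e., |P(T)|/|Q(T)| = r_{P,Q}(l)) contains a subset T1 of Q-equivalent traces with |P(T1)| = r_{P,Q}(l). -/
variable {B : Type} [DecidableEq B]

/-!
Split `T` into the classes `T_c = {t ∈ T | Q(t) = c}`, one for each of the `k = |Q(T)|` values
`c`. Each class is itself an admissible set of traces, with `|Q(T_c)| = 1`, so `|P(T_c)| ≤ r`,
where `r = r_{P,Q}(l)`. Since `P(T)` is the union of the `P(T_c)` and `T` attains the ratio,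
`r k = |P(T)| ≤ Σ_c |P(T_c)| ≤ r k`, so some class has `|P(T_c)| = r`.
That every admissible ratio is at most `r` needs the defining set of `sSup` to be bounded,
which holds because a trace of length `l` has at most `l` misses.
-/

open Finset

section Fibers

variable {α β γ : Type*} [DecidableEq α] [DecidableEq β] [DecidableEq γ]

theorem Finset.card_image_le_sum_card_image_fiber (s : Finset α) (f : α → β) (g : α → γ) :
    #(s.image f) ≤ ∑ c ∈ s.image g, #({x ∈ s | g x = c}.image f) := by
  conv_lhs => rw [← s.image_biUnion_filter_eq g, biUnion_image]
  exact card_biUnion_le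

theorem Finset.exists_card_image_fiber_eq {s : Finset α} (hs : s.Nonempty) (f : α → β) (g : α → γ)
    {r : ℝ} (hratio : (#(s.image f) : ℝ) / #(s.image g) = r)
    (hle : ∀ c ∈ s.image g, (#({x ∈ s | g x = c}.image f) : ℝ) ≤ r) :
    ∃ c ∈ s.image g, (#({x ∈ s | g x = c}.image f) : ℝ) = r := by
  have hpos : (0 : ℝ) < #(s.image g) := by exact_mod_cast (hs.image g).card_pos
  have hsum : ∑ _c ∈ s.image g, r ≤ ∑ c ∈ s.image g, (#({x ∈ s | g x = c}.image f) : ℝ) := by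
    rw [sum_const, nsmul_eq_mul, ← hratio, mul_div_cancel₀ _ hpos.ne']
    exact_mod_cast s.card_image_le_sum_card_image_fiber f g
  obtain ⟨c, hc, hge⟩ := exists_le_of_sum_le (hs.image g) hsum
  exact ⟨c, hc, (hle c hc).antisymm hge⟩

end Fibers

lemma CacheAlg.missesFrom_le (P : CacheAlg B) (g : P.Config) (t : List B) :
    P.missesFrom g t ≤ t.length := by
  induction t generalizing g with
  | nil => simp [CacheAlg.missesFrom]
  | cons b t ih =>
    simp only [CacheAlg.missesFrom, List.length_cons]
    have := ih (P.upd g b)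
    split <;> omega

lemma CacheAlg.card_image_misses_le (P : CacheAlg B) {l : ℕ} {T : Finset (List B)}
    (hlen : ∀ t ∈ T, t.length = l) : #(T.image P.misses) ≤ l + 1 := by
  have hsub : T.image P.misses ⊆ range (l + 1) := by
    simp only [subset_iff, mem_image, mem_range]
    rintro _ ⟨t, ht, rfl⟩
    have := P.missesFrom_le P.initConfig t
    rw [hlen t ht] at this
    exact Nat.lt_succ_of_le this
  simpa using card_le_card hsub

lemma le_leakRatio (P Q : CacheAlg B) {l : ℕ} {T : Finset (List B)} (hne : T.Nonempty)
    (hlen : ∀ t ∈ T, t.length = l) :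
    (#(T.image P.misses) : ℝ) / #(T.image Q.misses) ≤ leakRatio P Q l := by
  refine le_csSup ⟨l + 1, ?_⟩ ⟨T, hne, hlen, rfl⟩
  rintro _ ⟨T', hne', hlen', rfl⟩
  have hQ : (1 : ℝ) ≤ #(T'.image Q.misses) := by exact_mod_cast (hne'.image _).card_pos
  calc (#(T'.image P.misses) : ℝ) / #(T'.image Q.misses) ≤ #(T'.image P.misses) :=
        div_le_self (Nat.cast_nonneg _) hQ
    _ ≤ l + 1 := by exact_mod_cast P.card_image_misses_le hlen'

lemma card_image_misses_le_leakRatio_of_equiv (P Q : CacheAlg B) {l : ℕ} {T : Finset (List B)}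
    (hne : T.Nonempty) (hlen : ∀ t ∈ T, t.length = l)
    (hequiv : ∀ t1 ∈ T, ∀ t2 ∈ T, Q.misses t1 = Q.misses t2) :
    (#(T.image P.misses) : ℝ) ≤ leakRatio P Q l := by
  have hQ : #(T.image Q.misses) = 1 := by
    refine le_antisymm (card_le_one.mpr ?_) (hne.image _).card_pos
    simp only [mem_image]
    rintro _ ⟨t1, ht1, rfl⟩ _ ⟨t2, ht2, rfl⟩
    exact hequiv t1 ht1 t2 ht2
  simpa [hQ] using le_leakRatio P Q hne hlen

theorem maximizing_set_contains_equivalent_subset (P Q : CacheAlg B)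
    (l : ℕ) (T : Finset (List B)) (hne : T.Nonempty)
    (hlen : ∀ t ∈ T, t.length = l)
    (hmax : ((T.image P.misses).card : ℝ) / ((T.image Q.misses).card : ℝ) =
      leakRatio P Q l) :
    ∃ T1 ⊆ T, T1.Nonempty ∧
      (∀ t1 ∈ T1, ∀ t2 ∈ T1, Q.misses t1 = Q.misses t2) ∧
      ((T1.image P.misses).card : ℝ) = leakRatio P Q l := by
  have hequiv : ∀ c, ∀ t1 ∈ {t ∈ T | Q.misses t = c}, ∀ t2 ∈ {t ∈ T | Q.misses t = c},
      Q.misses t1 = Q.misses t2 := by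
    intro c t1 ht1 t2 ht2
    rw [(mem_filter.mp ht1).2, (mem_filter.mp ht2).2]
  have hfiber_ne : ∀ c ∈ T.image Q.misses, ({t ∈ T | Q.misses t = c}).Nonempty := by
    simp only [mem_image]
    rintro c ⟨t, ht, rfl⟩
    exact ⟨t, mem_filter.mpr ⟨ht, rfl⟩⟩
  obtain ⟨c, hc, heq⟩ := T.exists_card_image_fiber_eq hne P.misses Q.misses hmax
    fun c hc => card_image_misses_le_leakRatio_of_equiv P Q (hfiber_ne c hc)
      (fun t ht => hlen t (mem_filter.mp ht).1) (hequiv c)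
  exact ⟨_, filter_subset _ T, hfiber_ne c hc, hequiv c, heq⟩
end

section
/- Let π : B → B be a bijection on memory blocks, lifted to cache contents by π*(c)(j) = π(c(j)) if c(j) ∈ B and ⊥ otherwise, to configurations by π*(s,c) = (s, π*(c)), and to traces elementwise. If the eviction function of cache algorithm P is independent of the accessed block, then for every configuration (s,c) and every trace t: π*(update_P((s,c), t)) = update_P(π*(s,c), π*(t)). -/
variable {B : Type} [DecidableEq B]

/-! Line `j` holds `b` iff after renaming it holds `π b`, so a hit stays a hit on the same line
(hence the same `choose`), and a miss stays a miss; block-independence of `evict` then makes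
both misses evict the same line. -/

theorem renameContent_eq_some_iff {B : Type} (π : B ≃ B) {n : ℕ} (c : Fin n → Option B)
    (j : Fin n) (b : B) : renameContent π c j = some (π b) ↔ c j = some b := by
  simp [renameContent]

theorem renameContent_update {B : Type} (π : B ≃ B) {n : ℕ} (c : Fin n → Option B)
    (j : Fin n) (x : Option B) :
    renameContent π (Function.update c j x) = Function.update (renameContent π c) j (x.map π) :=
  Function.comp_update _ _ _ _

theorem CacheAlg.renameConfig_upd (P : CacheAlg B) (hEvict : P.EvictBlockIndep) (π : B ≃ B)
    (g : P.Config) (b : B) :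
    P.renameConfig π (P.upd g b) = P.upd (P.renameConfig π g) (π b) := by
  simp only [CacheAlg.upd, CacheAlg.renameConfig, renameContent_eq_some_iff]
  split_ifs
  · rfl
  · rw [hEvict g.1 (π b) b, renameContent_update]
    rfl

theorem rename_commutes_update (P : CacheAlg B) (hEvict : P.EvictBlockIndep)
    (π : B ≃ B) (g : P.Config) (t : List B) :
    P.renameConfig π (P.updTrace g t) =
      P.updTrace (P.renameConfig π g) (t.map π) := by
  induction t generalizing g with
  | nil => rfl
  | cons b t ih =>
    simp only [CacheAlg.updTrace, List.map_cons, ih, P.renameConfig_upd hEvict]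
end

section
/- Let P and Q be cache algorithms with finite control-state sets S_P and S_Q and block-independent eviction. Then the quotient of G_P × G_Q by the congruence relation ≡ is finite; in fact its cardinality is at most |S_P|·|S_Q|·(n_P + n_Q + 1)^{n_P + n_Q}. -/
variable {B : Type} [DecidableEq B]

/-!
Only the control states and the equality pattern of the blocks held by the two caches survive
renaming. Since both caches together have `n_P + n_Q` lines, a configuration pair is determined up
to `≡` by its two control states and by a map sending each line to `⊥` or to a chosen line holding
the same block; there are at most `(n_P + n_Q + 1) ^ (n_P + n_Q)` such maps. Conversely, two
contents with the same pattern differ by a bijection between finitely many blocks, which extends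
to a permutation of `B`.
-/

theorem Set.Finite.exists_equiv_extend {α : Type*} {s : Set α} (hs : s.Finite) (f : s ↪ α) :
    ∃ π : α ≃ α, ∀ x : s, π x = f x := by
  cases finite_or_infinite α
  · exact Cardinal.extend_function_finite f ⟨Equiv.refl α⟩
  · exact Cardinal.extend_function_of_lt f
      (hs.lt_aleph0.trans_le (Cardinal.aleph0_le_mk α)) ⟨Equiv.refl α⟩

theorem exists_equiv_map_eq {ι α : Type*} [Finite ι] {c c' : ι → Option α}
    (hker : ∀ i j, c i = c j ↔ c' i = c' j) (hnone : ∀ i, c i = none ↔ c' i = none) :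
    ∃ π : α ≃ α, ∀ i, (c i).map π = c' i := by
  have hpartner : ∀ a ∈ {a | ∃ i, c i = some a}, ∃ a', ∀ i, c i = some a ↔ c' i = some a' := by
    rintro a ⟨i, hi⟩
    obtain ⟨a', hi'⟩ :=
      Option.ne_none_iff_exists'.mp (mt (hnone i).mpr (hi ▸ Option.some_ne_none a))
    exact ⟨a', fun j => by rw [← hi, ← hi', hker]⟩
  choose φ hφ using hpartner
  have hs : {a | ∃ i, c i = some a}.Finite :=
    (Set.finite_range c).preimage (Option.some_injective α).injOn |>.subset
      fun a ⟨i, hi⟩ => ⟨i, hi⟩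
  let f : {a | ∃ i, c i = some a} ↪ α :=
    ⟨fun a => φ a.1 a.2, by
      rintro ⟨a, i, hi⟩ ⟨b, j, hj⟩ hab
      have hab : φ a _ = φ b _ := hab
      have hib := (hφ a ⟨i, hi⟩ i).mp hi
      rw [hab, ← hφ b ⟨j, hj⟩ i] at hib
      exact Subtype.ext (Option.some_injective α (hi.symm.trans hib))⟩
  obtain ⟨π, hπ⟩ := hs.exists_equiv_extend f
  refine ⟨π, fun i => ?_⟩
  rcases hi : c i with _ | a
  · exact ((hnone i).mp hi).symm
  · rw [Option.map_some, hπ ⟨a, i, hi⟩]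
    exact ((hφ a ⟨i, hi⟩ i).mp hi).symm

/-- A point of the fibre of `c` through `i`, chosen as a function of the fibre alone so that it
is invariant under injective relabelling of the values. -/
noncomputable def fiberRep {ι α : Type*} (c : ι → α) (i : ι) : ι :=
  Classical.choose (⟨i, rfl⟩ : ∃ j, c j = c i)

theorem fiberRep_eq_fiberRep_iff {ι α : Type*} (c : ι → α) (i j : ι) :
    fiberRep c i = fiberRep c j ↔ c i = c j := by
  have hrep : ∀ k, c (fiberRep c k) = c k := fun k =>
    Classical.choose_spec (⟨k, rfl⟩ : ∃ j, c j = c k)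
  refine ⟨fun h => by rw [← hrep i, h, hrep j], fun h => ?_⟩
  simp only [fiberRep, h]

theorem fiberRep_comp_of_injective {ι α β : Type*} (c : ι → α) {f : α → β}
    (hf : Function.Injective f) : fiberRep (f ∘ c) = fiberRep c := by
  funext i
  simp only [fiberRep, Function.comp_apply, hf.eq_iff]

noncomputable def contentPattern {ι α : Type*} (c : ι → Option α) (i : ι) : Option ι :=
  (c i).map fun _ => fiberRep c i

theorem contentPattern_map {ι α β : Type*} (c : ι → Option α) {f : α → β}
    (hf : Function.Injective f) : contentPattern (fun i => (c i).map f) = contentPattern c := by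
  funext i
  simp only [contentPattern, Option.map_map]
  rw [show (fun i => (c i).map f) = Option.map f ∘ c from rfl,
    fiberRep_comp_of_injective c (Option.map_injective hf)]
  rfl

theorem ker_eq_of_contentPattern_eq {ι α : Type*} {c c' : ι → Option α}
    (h : contentPattern c = contentPattern c') :
    (∀ i j, c i = c j ↔ c' i = c' j) ∧ ∀ i, c i = none ↔ c' i = none := by
  have hnone : ∀ i, c i = none ↔ c' i = none := fun i =>
    ⟨fun hc => by simpa [contentPattern, hc, eq_comm] using congrFun h i,
      fun hc => by simpa [contentPattern, hc] using congrFun h i⟩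
  have hrep : ∀ i, c i ≠ none → fiberRep c i = fiberRep c' i := fun i hi => by
    obtain ⟨a, ha⟩ := Option.ne_none_iff_exists'.mp hi
    obtain ⟨a', ha'⟩ := Option.ne_none_iff_exists'.mp (mt (hnone i).mpr hi)
    simpa [contentPattern, ha, ha'] using congrFun h i
  refine ⟨fun i j => ?_, hnone⟩
  by_cases hi : c i = none
  · rw [hi, (hnone i).mp hi, eq_comm, hnone, eq_comm]
  by_cases hj : c j = none
  · rw [hj, (hnone j).mp hj, hnone]
  rw [← fiberRep_eq_fiberRep_iff c, ← fiberRep_eq_fiberRep_iff c', hrep i hi, hrep j hj]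

theorem exists_equiv_map_eq_iff_contentPattern_eq {ι α : Type*} [Finite ι]
    {c c' : ι → Option α} :
    (∃ π : α ≃ α, ∀ i, (c i).map π = c' i) ↔ contentPattern c = contentPattern c' := by
  refine ⟨fun ⟨π, hπ⟩ => ?_, fun h => (ker_eq_of_contentPattern_eq h).elim exists_equiv_map_eq⟩
  rw [← contentPattern_map c π.injective]
  exact congrArg contentPattern (funext hπ)

theorem Quot.lift_injective_of_rel_iff {α β : Sort*} {r : α → α → Prop} {f : α → β}
    (hf : ∀ x y, r x y ↔ f x = f y) :
    Function.Injective (Quot.lift f fun x y => (hf x y).mp) := by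
  rintro ⟨x⟩ ⟨y⟩ h
  exact Quot.sound ((hf x y).mpr h)

def jointContent {B : Type} {P Q : CacheAlg B} (x : P.Config × Q.Config) :
    Fin P.n ⊕ Fin Q.n → Option B :=
  Sum.elim x.1.2 x.2.2

noncomputable def congruenceInvariant {B : Type} {P Q : CacheAlg B} (x : P.Config × Q.Config) :
    P.S × Q.S × (Fin P.n ⊕ Fin Q.n → Option (Fin P.n ⊕ Fin Q.n)) :=
  (x.1.1, x.2.1, contentPattern (jointContent x))

theorem cacheCongruent_iff {B : Type} (P Q : CacheAlg B) (x y : P.Config × Q.Config) :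
    CacheCongruent P Q x y ↔
      x.1.1 = y.1.1 ∧ x.2.1 = y.2.1 ∧
        ∃ π : B ≃ B, ∀ i, (jointContent x i).map π = jointContent y i := by
  obtain ⟨⟨s, c⟩, ⟨t, d⟩⟩ := x
  obtain ⟨⟨s', c'⟩, ⟨t', d'⟩⟩ := y
  simp only [CacheCongruent, CacheAlg.renameConfig, renameContent, jointContent, Prod.mk.injEq,
    Sum.forall, Sum.elim_inl, Sum.elim_inr, funext_iff]
  constructor
  · rintro ⟨π, ⟨rfl, hc⟩, rfl, hd⟩
    exact ⟨rfl, rfl, π, hc, hd⟩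
  · rintro ⟨rfl, rfl, π, hc, hd⟩
    exact ⟨π, ⟨rfl, hc⟩, rfl, hd⟩

theorem cacheCongruent_iff_congruenceInvariant_eq {B : Type} (P Q : CacheAlg B)
    (x y : P.Config × Q.Config) :
    CacheCongruent P Q x y ↔ congruenceInvariant x = congruenceInvariant y := by
  rw [cacheCongruent_iff, exists_equiv_map_eq_iff_contentPattern_eq]
  simp only [congruenceInvariant, Prod.mk.injEq]

theorem quotient_congruent_finite_general (P Q : CacheAlg B)
    [Fintype P.S] [Fintype Q.S] :
    Finite (Quot (CacheCongruent P Q)) ∧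
    Nat.card (Quot (CacheCongruent P Q)) ≤
      Fintype.card P.S * Fintype.card Q.S * (P.n + Q.n + 1) ^ (P.n + Q.n) := by
  have hinj := Quot.lift_injective_of_rel_iff (cacheCongruent_iff_congruenceInvariant_eq P Q)
  refine ⟨Finite.of_injective _ hinj, (Nat.card_le_card_of_injective _ hinj).trans_eq ?_⟩
  simp [Nat.card_eq_fintype_card, mul_assoc]

theorem quotient_congruent_finite (P Q : CacheAlg B) [Infinite B]
    [Fintype P.S] [Fintype Q.S]
    (hP : P.EvictBlockIndep) (hQ : Q.EvictBlockIndep) :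
    Finite (Quot (CacheCongruent P Q)) ∧
    Nat.card (Quot (CacheCongruent P Q)) ≤
      Fintype.card P.S * Fintype.card Q.S * (P.n + Q.n + 1) ^ (P.n + Q.n) :=
  quotient_congruent_finite_general P Q
end
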